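/- Consider an iterated algorithm on n+1 qubits: starting from |0⟩⟨0| ⊗ σ where σ is the maximally mixed state on n qubits, each of k steps applies an arbitrary unitary to all qubits, discards (traces out) the ancilla qubit, and appends a fresh |0⟩⟨0| ancilla. If after the final step and discard the state on the n system qubits is pure, then k ≥ n. -/

import Mathlib

open Matrix BigOperators Kronecker
open scoped Classical ComplexOrder

noncomputable section

def ptraceFst {C D : Type*} [Fintype C] (σ : Matrix (C × D) (C × D) ℂ) :
    Matrix D D ℂ := Matrix.of fun y y' => ∑ j : C, σ (j, y) (j, y')

def ptraceSnd {C D : Type*} [Fintype D] (σ : Matrix (C × D) (C × D) ℂ) :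
    Matrix C C ℂ := Matrix.of fun x x' => ∑ j : D, σ (x, j) (x', j)

def traceNorm {n : Type*} [Fintype n] [DecidableEq n] (M : Matrix n n ℂ) : ℝ :=
  ((Matrix.posSemidef_conjTranspose_mul_self M).1.eigenvectorUnitary.1 *
    diagonal ((fun x : ℝ => (x : ℂ)) ∘ (√·) ∘ (Matrix.posSemidef_conjTranspose_mul_self M).1.eigenvalues) *
    (star (Matrix.posSemidef_conjTranspose_mul_self M).1.eigenvectorUnitary : Matrix n n ℂ)).trace.re

def traceDist {n : Type*} [Fintype n] [DecidableEq n] (σ σ' : Matrix n n ℂ) : ℝ :=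
  traceNorm (σ - σ') / 2

def IsDensity {n : Type*} [Fintype n] (M : Matrix n n ℂ) : Prop :=
  M.PosSemidef ∧ M.trace = 1

def IsPure {n : Type*} [Fintype n] (σ : Matrix n n ℂ) : Prop :=
  ∃ ψ : n → ℂ, (∑ i, Complex.normSq (ψ i)) = 1 ∧ σ = Matrix.vecMulVec ψ (star ψ)

def inputState (a b : ℕ) :
    Matrix (Fin (2^a) × Fin (2^b)) (Fin (2^a) × Fin (2^b)) ℂ :=
  (Matrix.single 0 0 1) ⊗ₖ (((2:ℂ)^b)⁻¹ • (1 : Matrix (Fin (2^b)) (Fin (2^b)) ℂ))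

def measSub {C D : Type*} [Fintype C] [Fintype D] (σ : Matrix (C × D) (C × D) ℂ) (j : C) :
    Matrix D D ℂ := Matrix.of fun y y' => σ (j, y) (j, y')

def measProb {C D : Type*} [Fintype C] [Fintype D] (σ : Matrix (C × D) (C × D) ℂ) (j : C) : ℝ :=
  ((measSub σ j).trace).re

def gibbs {n : Type*} [Fintype n] [DecidableEq n] (β : ℝ) {H : Matrix n n ℂ}
    (hH : H.IsHermitian) : Matrix n n ℂ :=
  ((hH.cfc (fun x => Real.exp (-β * x))).trace)⁻¹ • hH.cfc (fun x => Real.exp (-β * x))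

def vNEntropy {n : Type*} [Fintype n] [DecidableEq n] (M : Matrix n n ℂ) : ℝ :=
  if h : M.IsHermitian then -∑ i, (h.eigenvalues i) * Real.logb 2 (h.eigenvalues i) else 0

def iterState (n : ℕ) (U : ℕ → Matrix (Fin 2 × Fin (2^n)) (Fin 2 × Fin (2^n)) ℂ) :
    ℕ → Matrix (Fin (2^n)) (Fin (2^n)) ℂ
  | 0 => ((2:ℂ)^n)⁻¹ • 1
  | k+1 => ptraceFst (U k * ((Matrix.single 0 0 1) ⊗ₖ iterState n U k) * (U k)ᴴ)

/-!
The rank of the system state at most halves in each round. Appending `|0⟩⟨0|` and conjugating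
by a unitary preserve the rank. For positive semidefinite `σ = Bᴴ B` on `C × D`, the diagonal
blocks are `σⱼⱼ = Bⱼᴴ Bⱼ` with `Bⱼ` the `j`-th block of columns of `B`, so
`rank σ = rank B ≤ ∑ⱼ rank Bⱼ = ∑ⱼ rank σⱼⱼ`; and each `σⱼⱼ` has rank at most that of the
positive semidefinite sum `∑ⱼ σⱼⱼ`, the partial trace. Hence `2 ^ n ≤ 2 ^ k * rank` after
`k` rounds, while a pure state has rank at most `1`.
-/

namespace Matrix

section Field

variable {K : Type*} [Field K] {m n : Type*} [Fintype n]

theorem rank_add_le (A B : Matrix m n K) : (A + B).rank ≤ A.rank + B.rank := by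
  rw [rank, rank, rank, mulVecLin_add]
  exact (Submodule.finrank_mono (LinearMap.range_add_le _ _)).trans
    (Submodule.finrank_add_le_finrank_add_finrank _ _)

theorem rank_sum_le {ι : Type*} (s : Finset ι) (A : ι → Matrix m n K) :
    (∑ i ∈ s, A i).rank ≤ ∑ i ∈ s, (A i).rank :=
  Finset.le_sum_of_subadditive (fun A : Matrix m n K => A.rank) rank_zero.le rank_add_le s A

theorem rank_le_sum_rank_submatrix_col {C D : Type*} [Fintype C] [Fintype D]
    (B : Matrix m (C × D) K) : B.rank ≤ ∑ j, (B.submatrix id (j, ·)).rank := by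
  have hB :
      B = ∑ j, B.submatrix id (j, ·) * (1 : Matrix (C × D) (C × D) K).submatrix (j, ·) id := by
    ext i p
    simp [Matrix.sum_apply, mul_apply, one_apply, ← Fintype.sum_prod_type']
  calc B.rank
      ≤ ∑ j, (B.submatrix id (j, ·) * (1 : Matrix (C × D) (C × D) K).submatrix (j, ·) id).rank := by
        conv_lhs => rw [hB]
        exact rank_sum_le _ _
    _ ≤ _ := Finset.sum_le_sum fun j _ => rank_mul_le_left _ _

end Field

variable {𝕜 : Type*} [RCLike 𝕜] {n : Type*} [Fintype n]

theorem PosSemidef.ker_mulVecLin_add_le {M N : Matrix n n 𝕜} (hM : M.PosSemidef)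
    (hN : N.PosSemidef) :
    LinearMap.ker (M + N).mulVecLin ≤ LinearMap.ker M.mulVecLin := by
  intro x hx
  rw [LinearMap.mem_ker, mulVecLin_apply] at hx ⊢
  have hsum : star x ⬝ᵥ M *ᵥ x + star x ⬝ᵥ N *ᵥ x = 0 := by
    rw [← dotProduct_add, ← add_mulVec, hx, dotProduct_zero]
  have hMx := ((add_eq_zero_iff_of_nonneg (hM.dotProduct_mulVec_nonneg x)
    (hN.dotProduct_mulVec_nonneg x)).mp hsum).1
  exact (hM.dotProduct_mulVec_zero_iff x).mp hMx

theorem PosSemidef.rank_le_rank_add {M N : Matrix n n 𝕜} (hM : M.PosSemidef)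
    (hN : N.PosSemidef) : M.rank ≤ (M + N).rank := by
  have hker := Submodule.finrank_mono (hM.ker_mulVecLin_add_le hN)
  have hM' := LinearMap.finrank_range_add_finrank_ker M.mulVecLin
  have hMN := LinearMap.finrank_range_add_finrank_ker (M + N).mulVecLin
  rw [rank, rank]
  omega

theorem PosSemidef.rank_le_rank_sum {ι : Type*} {s : Finset ι} {A : ι → Matrix n n 𝕜}
    (hA : ∀ i ∈ s, (A i).PosSemidef) {i : ι} (hi : i ∈ s) :
    (A i).rank ≤ (∑ j ∈ s, A j).rank := by
  rw [← Finset.add_sum_erase s A hi]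
  exact (hA i hi).rank_le_rank_add
    (posSemidef_sum _ fun j hj => hA j (Finset.mem_of_mem_erase hj))

theorem PosSemidef.rank_le_sum_rank_submatrix {C D : Type*} [Fintype C] [Fintype D]
    {σ : Matrix (C × D) (C × D) 𝕜} (hσ : σ.PosSemidef) :
    σ.rank ≤ ∑ j, (σ.submatrix (j, ·) (j, ·)).rank := by
  open scoped MatrixOrder in
  obtain ⟨B, rfl⟩ := CStarAlgebra.nonneg_iff_eq_star_mul_self.mp hσ.nonneg
  rw [star_eq_conjTranspose]
  have hslice (j : C) : (Bᴴ * B).submatrix (j, ·) (j, ·) =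
      (B.submatrix id (j, ·))ᴴ * B.submatrix id (j, ·) := by
    rw [conjTranspose_submatrix, submatrix_mul _ _ _ _ _ Function.bijective_id]
  simp only [hslice, rank_conjTranspose_mul_self]
  exact rank_le_sum_rank_submatrix_col B

theorem rank_mul_mul_conjTranspose_of_mem_unitaryGroup [DecidableEq n] {U : Matrix n n 𝕜}
    (hU : U ∈ unitaryGroup n 𝕜) (A : Matrix n n 𝕜) : (U * A * Uᴴ).rank = A.rank := by
  rw [rank_mul_eq_left_of_isUnit_det _ _ (UnitaryGroup.det_isUnit ⟨Uᴴ, Unitary.star_mem hU⟩),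
    rank_mul_eq_right_of_isUnit_det _ _ (UnitaryGroup.det_isUnit ⟨U, hU⟩)]

theorem PosSemidef.single {ι : Type*} [Fintype ι] [DecidableEq ι] (i : ι) {r : 𝕜} (hr : 0 ≤ r) :
    (single i i r).PosSemidef :=
  diagonal_single i r ▸ PosSemidef.diagonal (Pi.single_nonneg.mpr hr)

theorem submatrix_single_kronecker {α ι D : Type*} [MulZeroOneClass α] [DecidableEq ι] (i : ι)
    (ρ : Matrix D D α) : (single i i 1 ⊗ₖ ρ).submatrix (i, ·) (i, ·) = ρ := by
  ext y y'
  simp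

theorem rank_le_rank_single_kronecker {ι D : Type*} [Fintype ι] [DecidableEq ι] [Fintype D] (i : ι)
    (ρ : Matrix D D 𝕜) : ρ.rank ≤ (single i i 1 ⊗ₖ ρ).rank := by
  conv_lhs => rw [← submatrix_single_kronecker i ρ]
  exact rank_submatrix_le _ _ _

end Matrix

section PartialTrace

variable {C D : Type*} [Fintype C]

theorem ptraceFst_eq_sum_submatrix (σ : Matrix (C × D) (C × D) ℂ) :
    ptraceFst σ = ∑ j, σ.submatrix (j, ·) (j, ·) := by
  ext y y'
  simp [ptraceFst, Matrix.sum_apply]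

theorem posSemidef_ptraceFst [Fintype D] {σ : Matrix (C × D) (C × D) ℂ} (hσ : σ.PosSemidef) :
    (ptraceFst σ).PosSemidef := by
  rw [ptraceFst_eq_sum_submatrix]
  exact posSemidef_sum _ fun j _ => hσ.submatrix _

theorem Matrix.PosSemidef.rank_le_card_mul_rank_ptraceFst [Fintype D]
    {σ : Matrix (C × D) (C × D) ℂ} (hσ : σ.PosSemidef) :
    σ.rank ≤ Fintype.card C * (ptraceFst σ).rank := by
  have hslice (j : C) : (σ.submatrix (j, ·) (j, ·)).rank ≤ (ptraceFst σ).rank := by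
    rw [ptraceFst_eq_sum_submatrix]
    exact PosSemidef.rank_le_rank_sum (A := fun j => σ.submatrix (j, ·) (j, ·))
      (fun j _ => hσ.submatrix _) (Finset.mem_univ j)
  calc σ.rank ≤ ∑ j, (σ.submatrix (j, ·) (j, ·)).rank := hσ.rank_le_sum_rank_submatrix
    _ ≤ ∑ _j : C, (ptraceFst σ).rank := Finset.sum_le_sum fun j _ => hslice j
    _ = Fintype.card C * (ptraceFst σ).rank := by simp

variable [Fintype D] [DecidableEq C] (i : C) {V : Matrix (C × D) (C × D) ℂ} {ρ : Matrix D D ℂ}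

theorem posSemidef_ptraceFst_conj_single_kronecker (hρ : ρ.PosSemidef) :
    (ptraceFst (V * (single i i 1 ⊗ₖ ρ) * Vᴴ)).PosSemidef :=
  posSemidef_ptraceFst
    (((PosSemidef.single i zero_le_one).kronecker hρ).mul_mul_conjTranspose_same V)

theorem rank_le_card_mul_rank_ptraceFst_conj_single_kronecker [DecidableEq D]
    (hV : V ∈ unitaryGroup (C × D) ℂ) (hρ : ρ.PosSemidef) :
    ρ.rank ≤ Fintype.card C * (ptraceFst (V * (single i i 1 ⊗ₖ ρ) * Vᴴ)).rank :=
  calc ρ.rank ≤ (single i i 1 ⊗ₖ ρ).rank := rank_le_rank_single_kronecker i ρ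
    _ = (V * (single i i 1 ⊗ₖ ρ) * Vᴴ).rank :=
        (rank_mul_mul_conjTranspose_of_mem_unitaryGroup hV _).symm
    _ ≤ _ := (((PosSemidef.single i zero_le_one).kronecker hρ).mul_mul_conjTranspose_same V
        ).rank_le_card_mul_rank_ptraceFst

end PartialTrace

section Iteration

variable {n : ℕ} {U : ℕ → Matrix (Fin 2 × Fin (2^n)) (Fin 2 × Fin (2^n)) ℂ}

theorem iterState_posSemidef (k : ℕ) : (iterState n U k).PosSemidef := by
  induction k with
  | zero => exact PosSemidef.one.smul (by positivity)
  | succ k ih => exact posSemidef_ptraceFst_conj_single_kronecker 0 ih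

theorem rank_iterState_zero : (iterState n U 0).rank = 2^n := by
  rw [iterState, rank_smul_of_mem_nonZeroDivisors _ (mem_nonZeroDivisors_of_ne_zero (by simp)),
    rank_one, Fintype.card_fin]

theorem two_pow_le_two_pow_mul_rank_iterState
    (hU : ∀ i, U i ∈ Matrix.unitaryGroup (Fin 2 × Fin (2^n)) ℂ) (k : ℕ) :
    2^n ≤ 2^k * (iterState n U k).rank := by
  induction k with
  | zero => simp [rank_iterState_zero]
  | succ k ih =>
    have hstep : (iterState n U k).rank ≤ 2 * (iterState n U (k + 1)).rank := by
      simpa only [Fintype.card_fin, iterState] using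
        rank_le_card_mul_rank_ptraceFst_conj_single_kronecker 0 (hU k) (iterState_posSemidef k)
    calc 2^n ≤ 2^k * (iterState n U k).rank := ih
      _ ≤ 2^k * (2 * (iterState n U (k + 1)).rank) := Nat.mul_le_mul_left _ hstep
      _ = 2^(k + 1) * (iterState n U (k + 1)).rank := by ring

end Iteration

theorem stmt15 (n k : ℕ)
    (U : ℕ → Matrix (Fin 2 × Fin (2^n)) (Fin 2 × Fin (2^n)) ℂ)
    (hU : ∀ i, U i ∈ Matrix.unitaryGroup (Fin 2 × Fin (2^n)) ℂ)
    (hpure : IsPure (iterState n U k)) : n ≤ k := by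
  obtain ⟨ψ, -, hψ⟩ := hpure
  have hrank : (iterState n U k).rank ≤ 1 := hψ ▸ rank_vecMulVec_le _ _
  have hpow : 2^n ≤ 2^k := calc
    2^n ≤ 2^k * (iterState n U k).rank := two_pow_le_two_pow_mul_rank_iterState hU k
    _ ≤ 2^k * 1 := Nat.mul_le_mul_left _ hrank
    _ = 2^k := mul_one _
  exact (Nat.pow_le_pow_iff_right one_lt_two).mp hpow

end
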